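/- arXiv:1612.03029 — 2 statements merged into one kernel-verified Lean document; each statement's English description precedes it below -/
import Mathlib

section
/- Let K ⊆ ℝ² be a nonempty compact convex set with 0 ∈ K and let st(K) be its Steiner point. Then for every x ∈ K: Area(F_x(K)) = Area(F₀(K)) − π·⟨x, st(K)⟩ + (π/2)·‖x‖². -/
/-!
A point `z` lies in the ball with diameter `[x, s]` iff `‖z - x‖² ≤ ⟪s - x, z - x⟫`, so for `x ∈ K`
the flower `F_x(K)` is the translate by `x` of the region star-shaped about `0` with radial
function `θ ↦ p_x(K, u_θ) ≥ 0`; in polar coordinates its area is `½ ∫₀^{2π} p_x(K, u_θ)² dθ`.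
Since `p_x(K, u) = p₀(K, u) - ⟪x, u⟫`, expanding the square leaves the cross term
`∫ p₀(K, u_θ) ⟪x, u_θ⟫ dθ = π ⟪x, st(K)⟫` and the quadratic term `∫ ⟪x, u_θ⟫² dθ = π ‖x‖²`.
-/

open Metric Real Set MeasureTheory
open scoped RealInnerProductSpace

noncomputable section

/-- The Euclidean plane. -/
abbrev E2 := EuclideanSpace ℝ (Fin 2)

/-- The unit vector `u_θ = (cos θ, sin θ)`. -/
def uvec (θ : ℝ) : E2 := (WithLp.equiv 2 (Fin 2 → ℝ)).symm ![Real.cos θ, Real.sin θ]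

/-- The vector `v_θ = (−sin θ, cos θ)`. -/
def vvec (θ : ℝ) : E2 := (WithLp.equiv 2 (Fin 2 → ℝ)).symm ![-Real.sin θ, Real.cos θ]

/-- The Voronoi flower of `L` with respect to `x`: the union over `s ∈ L` of the closed
balls admitting the segment `[x, s]` as a diameter. -/
def vflower (x : E2) (L : Set E2) : Set E2 :=
  ⋃ s ∈ L, closedBall ((2:ℝ)⁻¹ • (x + s)) (‖s - x‖ / 2)

/-- The support function of `L` with respect to `x`: `p_x(L, w) = sup_{s ∈ L} ⟨s − x, w⟩`. -/
def suppf (x : E2) (L : Set E2) (w : E2) : ℝ :=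
  sSup ((fun s => ⟪s - x, w⟫) '' L)

/-- The Steiner point: `st(K) = (1/π) ∫₀^{2π} p₀(K, u_θ) · u_θ dθ`. -/
def steinerPt (K : Set E2) : E2 :=
  (π⁻¹ : ℝ) • ∫ θ in (0:ℝ)..(2*π), suppf 0 K (uvec θ) • uvec θ

open Function (Periodic)

lemma inner_uvec (x : E2) (θ : ℝ) : ⟪x, uvec θ⟫ = x 0 * cos θ + x 1 * sin θ := by
  simp [PiLp.inner_apply, Fin.sum_univ_two, uvec]
  ring

lemma norm_uvec (θ : ℝ) : ‖uvec θ‖ = 1 := by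
  simp [EuclideanSpace.norm_eq, Fin.sum_univ_two, uvec]

@[fun_prop]
lemma continuous_uvec : Continuous uvec :=
  (PiLp.continuous_toLp 2 _).comp <| continuous_pi fun i => by fin_cases i <;> simp <;> fun_prop

lemma periodic_uvec : Periodic uvec (2 * π) := by
  intro θ
  ext i
  fin_cases i <;> simp [uvec]

section SupportFunction

variable {K : Set E2} {x w : E2}

lemma le_suppf (hK : IsCompact K) {s : E2} (hs : s ∈ K) : ⟪s - x, w⟫ ≤ suppf x K w :=
  le_csSup (hK.image (by fun_prop)).bddAbove (mem_image_of_mem _ hs)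

lemma suppf_le (hne : K.Nonempty) {c : ℝ} (h : ∀ s ∈ K, ⟪s - x, w⟫ ≤ c) : suppf x K w ≤ c :=
  csSup_le (hne.image _) (forall_mem_image.2 h)

lemma exists_suppf_eq (hne : K.Nonempty) (hK : IsCompact K) :
    ∃ s ∈ K, ⟪s - x, w⟫ = suppf x K w :=
  (hK.image (f := fun s => ⟪s - x, w⟫) (by fun_prop)).sSup_mem (hne.image _)

lemma suppf_nonneg (hK : IsCompact K) (hx : x ∈ K) : 0 ≤ suppf x K w := by
  simpa using le_suppf (x := x) (w := w) hK hx

lemma suppf_eq_sub (hne : K.Nonempty) (hK : IsCompact K) :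
    suppf x K w = suppf 0 K w - ⟪x, w⟫ := by
  apply le_antisymm
  · refine suppf_le hne fun s hs => ?_
    have := le_suppf (x := 0) (w := w) hK hs
    rw [sub_zero] at this
    rw [inner_sub_left]
    linarith
  · refine sub_le_iff_le_add.2 (suppf_le hne fun s hs => ?_)
    rw [sub_zero, ← sub_add_cancel s x, inner_add_left]
    linarith [le_suppf (x := x) (w := w) hK hs]

lemma suppf_smul (hne : K.Nonempty) (hK : IsCompact K) {c : ℝ} (hc : 0 ≤ c) :
    suppf x K (c • w) = c * suppf x K w := by
  apply le_antisymm
  · refine suppf_le hne fun s hs => ?_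
    rw [inner_smul_right]
    exact mul_le_mul_of_nonneg_left (le_suppf hK hs) hc
  · obtain ⟨s, hs, hval⟩ := exists_suppf_eq (x := x) (w := w) hne hK
    rw [← hval, ← inner_smul_right]
    exact le_suppf hK hs

lemma continuous_suppf (hne : K.Nonempty) (hK : IsCompact K) (x : E2) :
    Continuous (suppf x K) := by
  obtain ⟨C, hC⟩ := hK.exists_bound_of_continuousOn (f := fun s => s - x) (by fun_prop)
  refine (LipschitzWith.of_le_add_mul' C fun w w' => suppf_le hne fun s hs => ?_).continuous
  calc ⟪s - x, w⟫ = ⟪s - x, w'⟫ + ⟪s - x, w - w'⟫ := by rw [← inner_add_right, add_sub_cancel]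
    _ ≤ suppf x K w' + C * dist w w' := by
      gcongr
      · exact le_suppf hK hs
      · exact (real_inner_le_norm _ _).trans (by rw [dist_eq_norm]; gcongr; exact hC s hs)

end SupportFunction

lemma mem_closedBall_diam_iff {F : Type*} [NormedAddCommGroup F] [InnerProductSpace ℝ F]
    (x s z : F) :
    z ∈ closedBall ((2:ℝ)⁻¹ • (x + s)) (‖s - x‖ / 2) ↔ ‖z - x‖ ^ 2 ≤ ⟪s - x, z - x⟫ := by
  have hsq : ‖z - (2:ℝ)⁻¹ • (x + s)‖ ^ 2 = ‖z - x‖ ^ 2 - ⟪s - x, z - x⟫ + (‖s - x‖ / 2) ^ 2 := by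
    rw [show z - (2:ℝ)⁻¹ • (x + s) = (z - x) - (2:ℝ)⁻¹ • (s - x) by module, norm_sub_sq_real,
      inner_smul_right, norm_smul, real_inner_comm]
    norm_num
    ring
  rw [mem_closedBall, dist_eq_norm, ← sq_le_sq₀ (norm_nonneg _) (by positivity), hsq]
  constructor <;> intro h <;> linarith

lemma mem_vflower_iff {K : Set E2} (hne : K.Nonempty) (hK : IsCompact K) {x z : E2} :
    z ∈ vflower x K ↔ ‖z - x‖ ^ 2 ≤ suppf x K (z - x) := by
  simp only [vflower, mem_iUnion, exists_prop, mem_closedBall_diam_iff]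
  constructor
  · rintro ⟨s, hs, hz⟩
    exact hz.trans (le_suppf hK hs)
  · intro h
    obtain ⟨s, hs, hval⟩ := exists_suppf_eq (x := x) (w := z - x) hne hK
    exact ⟨s, hs, hval ▸ h⟩

def prodToE2 (p : ℝ × ℝ) : E2 := (WithLp.equiv 2 (Fin 2 → ℝ)).symm ![p.1, p.2]

lemma measurePreserving_prodToE2 : MeasurePreserving prodToE2 :=
  (EuclideanSpace.volume_preserving_symm_measurableEquiv_toLp (Fin 2)).symm.comp
    (volume_preserving_finTwoArrow ℝ).symm

lemma prodToE2_polarCoord_symm (p : ℝ × ℝ) : prodToE2 (polarCoord.symm p) = p.1 • uvec p.2 := by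
  ext i
  fin_cases i <;> simp [prodToE2, uvec, polarCoord_symm_apply]

lemma lintegral_Ioc_ofReal_id {t : ℝ} (ht : 0 ≤ t) :
    ∫⁻ r in Ioc 0 t, ENNReal.ofReal r = ENNReal.ofReal (t ^ 2 / 2) := by
  rw [← ofReal_integral_eq_lintegral_ofReal (f := fun r => r) continuous_id.integrableOn_Ioc ?_,
    ← intervalIntegral.integral_of_le ht, integral_id]
  · simp
  · filter_upwards [ae_restrict_mem measurableSet_Ioc] with r hr using hr.1.le

theorem volume_eq_lintegral_of_radial {S : Set E2} (hS : MeasurableSet S) {ρ : ℝ → ℝ}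
    (hρ : Measurable ρ) (hρ_nonneg : ∀ θ, 0 ≤ ρ θ) (hmem : ∀ r > 0, ∀ θ, r • uvec θ ∈ S ↔ r ≤ ρ θ) :
    volume S = ∫⁻ θ in Ioo (-π) π, ENNReal.ofReal (ρ θ ^ 2 / 2) := by
  set P := prodToE2 ⁻¹' S
  set D : Set (ℝ × ℝ) := {q | q.1 ≤ ρ q.2}
  have hpolar : ∀ p ∈ polarCoord.target,
      ENNReal.ofReal p.1 • P.indicator 1 (polarCoord.symm p)
        = D.indicator (ENNReal.ofReal ∘ Prod.fst) p := by
    intro p hp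
    have hmemP : polarCoord.symm p ∈ P ↔ p ∈ D := by
      rw [mem_preimage, prodToE2_polarCoord_symm]
      exact hmem p.1 hp.1 p.2
    by_cases h : p ∈ D
    · rw [indicator_of_mem (hmemP.2 h), indicator_of_mem h, Pi.one_apply, smul_eq_mul, mul_one]
      rfl
    · rw [indicator_of_notMem (mt hmemP.1 h), indicator_of_notMem h, smul_zero]
  have hradial : ∀ θ, ∫⁻ r in Ioi 0, D.indicator (ENNReal.ofReal ∘ Prod.fst) (r, θ)
      = ENNReal.ofReal (ρ θ ^ 2 / 2) := by
    intro θ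
    change ∫⁻ r in Ioi 0, (Iic (ρ θ)).indicator ENNReal.ofReal r = _
    rw [lintegral_indicator measurableSet_Iic, Measure.restrict_restrict measurableSet_Iic,
      inter_comm, Ioi_inter_Iic, lintegral_Ioc_ofReal_id (hρ_nonneg θ)]
  have hD : MeasurableSet D := measurableSet_le measurable_fst (hρ.comp measurable_snd)
  calc volume S = volume P :=
        (measurePreserving_prodToE2.measure_preimage hS.nullMeasurableSet).symm
    _ = ∫⁻ p, P.indicator 1 p :=
      (lintegral_indicator_one (measurePreserving_prodToE2.measurable hS)).symm
    _ = ∫⁻ p in polarCoord.target, ENNReal.ofReal p.1 • P.indicator 1 (polarCoord.symm p) :=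
      (lintegral_comp_polarCoord_symm _).symm
    _ = ∫⁻ p in Ioi 0 ×ˢ Ioo (-π) π, D.indicator (ENNReal.ofReal ∘ Prod.fst) p :=
      setLIntegral_congr_fun polarCoord.open_target.measurableSet hpolar
    _ = ∫⁻ θ in Ioo (-π) π, ∫⁻ r in Ioi 0, D.indicator (ENNReal.ofReal ∘ Prod.fst) (r, θ) := by
      rw [Measure.volume_eq_prod]
      exact setLIntegral_prod_symm _ ((Measurable.indicator (by fun_prop) hD).aemeasurable)
    _ = _ := by simp_rw [hradial]

theorem volume_real_eq_integral_of_radial {S : Set E2} (hS : MeasurableSet S) {ρ : ℝ → ℝ}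
    (hρ : Continuous ρ) (hρ_per : Periodic ρ (2 * π)) (hρ_nonneg : ∀ θ, 0 ≤ ρ θ)
    (hmem : ∀ r > 0, ∀ θ, r • uvec θ ∈ S ↔ r ≤ ρ θ) :
    volume.real S = ∫ θ in 0..2 * π, ρ θ ^ 2 / 2 := by
  have hρ_sq_per : Periodic (fun θ => ρ θ ^ 2 / 2) (2 * π) := fun θ => by simp only [hρ_per θ]
  have hint : IntegrableOn (fun θ => ρ θ ^ 2 / 2) (Ioo (-π) π) :=
    ((hρ.pow 2).div_const 2).integrableOn_Icc.mono_set Ioo_subset_Icc_self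
  rw [measureReal_def, volume_eq_lintegral_of_radial hS hρ.measurable hρ_nonneg hmem,
    ← ofReal_integral_eq_lintegral_ofReal hint (ae_of_all _ fun θ => by positivity),
    ENNReal.toReal_ofReal (setIntegral_nonneg measurableSet_Ioo fun θ _ => by positivity),
    ← integral_Ioc_eq_integral_Ioo, ← intervalIntegral.integral_of_le (by linarith [pi_pos]),
    ← zero_add (2 * π), ← hρ_sq_per.intervalIntegral_add_eq (-π) 0]
  ring_nf

lemma integral_inner_uvec_sq (x : E2) : ∫ θ in 0..2 * π, ⟪x, uvec θ⟫ ^ 2 = π * ‖x‖ ^ 2 := by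
  have hexpand : ∀ θ, ⟪x, uvec θ⟫ ^ 2 =
      x 0 ^ 2 * cos θ ^ 2 + x 1 ^ 2 * sin θ ^ 2 + 2 * x 0 * x 1 * (sin θ * cos θ) := by
    intro θ
    rw [inner_uvec]
    ring
  have hnorm : ‖x‖ ^ 2 = x 0 ^ 2 + x 1 ^ 2 := by
    rw [EuclideanSpace.norm_eq, Real.sq_sqrt (by positivity)]
    simp [Fin.sum_univ_two]
  simp_rw [hexpand]
  rw [intervalIntegral.integral_add, intervalIntegral.integral_add,
    intervalIntegral.integral_const_mul, intervalIntegral.integral_const_mul,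
    intervalIntegral.integral_const_mul, integral_cos_sq, integral_sin_sq, integral_sin_mul_cos₁]
  · simp only [cos_two_pi, sin_two_pi, cos_zero, sin_zero, hnorm]
    ring
  all_goals exact (by fun_prop : Continuous _).intervalIntegrable _ _

lemma integral_suppf_mul_inner_uvec {K : Set E2} (hne : K.Nonempty) (hK : IsCompact K) (x : E2) :
    ∫ θ in 0..2 * π, suppf 0 K (uvec θ) * ⟪x, uvec θ⟫ = π * ⟪x, steinerPt K⟫ := by
  have hint : IntervalIntegrable (fun θ => suppf 0 K (uvec θ) • uvec θ) volume 0 (2 * π) :=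
    (((continuous_suppf hne hK 0).comp continuous_uvec).smul continuous_uvec).intervalIntegrable _ _
  have hcomm := (innerSL ℝ x).intervalIntegral_comp_comm hint
  simp only [innerSL_apply_apply, inner_smul_right] at hcomm
  rw [steinerPt, inner_smul_right, ← hcomm, mul_inv_cancel_left₀ pi_ne_zero]

lemma preimage_add_vflower {K : Set E2} (hne : K.Nonempty) (hK : IsCompact K) (x : E2) :
    (x + ·) ⁻¹' vflower x K = {y | ‖y‖ ^ 2 ≤ suppf x K y} := by
  ext y
  simp [mem_vflower_iff hne hK]

lemma volume_real_vflower {K : Set E2} (hK : IsCompact K) {x : E2} (hx : x ∈ K) :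
    volume.real (vflower x K) = ∫ θ in 0..2 * π, suppf x K (uvec θ) ^ 2 / 2 := by
  have hne : K.Nonempty := ⟨x, hx⟩
  have hcont := continuous_suppf hne hK x
  rw [measureReal_def, ← measure_preimage_add _ x, preimage_add_vflower hne hK, ← measureReal_def]
  refine volume_real_eq_integral_of_radial (isClosed_le (by fun_prop) hcont).measurableSet
    (hcont.comp continuous_uvec) (periodic_uvec.comp (suppf x K))
    (fun θ => suppf_nonneg hK hx) fun r hr θ => ?_
  rw [mem_ofPred_eq, suppf_smul hne hK hr.le, norm_smul, norm_uvec, Real.norm_of_nonneg hr.le]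
  constructor <;> intro h <;> nlinarith

theorem area_flower_translate_general (K : Set E2) (hKc : IsCompact K) (h0 : (0:E2) ∈ K) :
    ∀ x ∈ K,
      (volume (vflower x K)).toReal
        = (volume (vflower 0 K)).toReal - π * ⟪x, steinerPt K⟫ + (π / 2) * ‖x‖ ^ 2 := by
  intro x hx
  have hne : K.Nonempty := ⟨0, h0⟩
  have hsuppf := continuous_suppf hne hKc 0
  have hexpand : ∀ θ, suppf x K (uvec θ) ^ 2 / 2 = suppf 0 K (uvec θ) ^ 2 / 2
      - suppf 0 K (uvec θ) * ⟪x, uvec θ⟫ + ⟪x, uvec θ⟫ ^ 2 / 2 := fun θ => by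
    rw [suppf_eq_sub hne hKc]
    ring
  rw [← measureReal_def, ← measureReal_def, volume_real_vflower hKc hx, volume_real_vflower hKc h0]
  simp_rw [hexpand]
  rw [intervalIntegral.integral_add, intervalIntegral.integral_sub,
    integral_suppf_mul_inner_uvec hne hKc, intervalIntegral.integral_div, intervalIntegral.integral_div, integral_inner_uvec_sq]
  · ring
  all_goals exact (by fun_prop : Continuous _).intervalIntegrable _ _

/-- for `x ∈ K`,
`Area(F_x(K)) = Area(F₀(K)) − π⟨x, st(K)⟩ + (π/2)‖x‖²`. -/
theorem area_flower_translate (K : Set E2) (hKne : K.Nonempty) (hKc : IsCompact K)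
    (hKconv : Convex ℝ K) (h0 : (0:E2) ∈ K) :
    ∀ x ∈ K,
      (volume (vflower x K)).toReal
        = (volume (vflower 0 K)).toReal - π * ⟪x, steinerPt K⟫ + (π / 2) * ‖x‖ ^ 2 :=
  area_flower_translate_general K hKc h0
end
end

section
/- Let D ⊆ ℝ² be compact, star-shaped with respect to 0 (0 ∈ D and the segment [0, x] is contained in D for every x ∈ D), with 0 ∈ interior D. Set K_D = {x ∈ ℝ² : closedBall(x, ‖x‖) ⊆ D} and F_D = ⋃_{x ∈ K_D} closedBall(x, ‖x‖). Then: (a) F_D ⊆ D; (b) F_D is the Voronoi flower of the convex set 2·K_D with respect to the origin, i.e. F_D = F₀({2x : x ∈ K_D}); (c) F_D is the unique maximal Voronoi flower contained in D: for every nonempty compact convex set K' with 0 ∈ K' and F₀(K') ⊆ D, one has F₀(K') ⊆ F_D; (d) F_D = ℝ² \ i( (convexHull ℝ (ℝ² \ i(D \ {0}))) \ {0} ), where i is the inversion of pole 0 with respect to the unit circle. -/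
/-
A ball `closedBall x ‖x‖` is the set of `z` with `‖z‖² ≤ 2⟪z, x⟫`. This condition is linear in `x`,
which makes `K_D` convex, and the inversion `i` maps the ball minus `0` onto the half-plane
`{v | 1 ≤ 2⟪v, x⟫}`. Hence, with `A = i(D \ {0})`, the centre `x` lies in `K_D` iff the open
half-plane `{v | 2⟪v, x⟫ < 1}` contains `Aᶜ`, and `y ≠ 0` lies in `F_D` iff some such half-plane
misses `i(y)`. As `D` is compact, `A` is closed, so `Aᶜ` is an open set containing `0`; by
Hahn–Banach the points that such a half-plane separates from `Aᶜ` are exactly the points outside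
`convexHull Aᶜ`, which gives (d).
-/

open Metric Real Set MeasureTheory
open scoped RealInnerProductSpace

noncomputable section

open EuclideanGeometry

section InnerProductSpace

variable {E : Type*} [NormedAddCommGroup E] [InnerProductSpace ℝ E]

theorem mem_closedBall_norm_iff {x z : E} : z ∈ closedBall x ‖x‖ ↔ ‖z‖ ^ 2 ≤ 2 * ⟪z, x⟫ := by
  rw [mem_closedBall, dist_eq_norm, ← sq_le_sq₀ (norm_nonneg _) (norm_nonneg _),
    norm_sub_sq_real]
  constructor <;> intro h <;> linarith

theorem convex_setOf_closedBall_norm_subset (D : Set E) :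
    Convex ℝ {x : E | closedBall x ‖x‖ ⊆ D} := by
  intro x₁ h₁ x₂ h₂ a b ha hb hab z hz
  rw [mem_closedBall_norm_iff, inner_add_right, real_inner_smul_right,
    real_inner_smul_right] at hz
  by_contra hzD
  have hz₁ : 2 * ⟪z, x₁⟫ < ‖z‖ ^ 2 := not_le.mp fun h ↦ hzD (h₁ (mem_closedBall_norm_iff.mpr h))
  have hz₂ : 2 * ⟪z, x₂⟫ < ‖z‖ ^ 2 := not_le.mp fun h ↦ hzD (h₂ (mem_closedBall_norm_iff.mpr h))
  rcases ha.eq_or_lt with rfl | ha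
  · nlinarith
  · nlinarith

theorem inversion_zero_one_apply (y : E) : inversion (0 : E) 1 y = (‖y‖ ^ 2)⁻¹ • y := by
  simp [inversion, inv_pow]

theorem mem_closedBall_norm_iff_one_le_inner_inversion {x y : E} (hy : y ≠ 0) :
    y ∈ closedBall x ‖x‖ ↔ 1 ≤ 2 * ⟪inversion (0 : E) 1 y, x⟫ := by
  have hy2 : 0 < ‖y‖ ^ 2 := by positivity
  rw [mem_closedBall_norm_iff, inversion_zero_one_apply, real_inner_smul_left, mul_left_comm,
    ← div_eq_inv_mul, one_le_div hy2]

theorem closedBall_norm_subset_iff {D : Set E} (h0 : (0 : E) ∈ D) {x : E} :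
    closedBall x ‖x‖ ⊆ D ↔ ∀ v, 1 ≤ 2 * ⟪v, x⟫ → v ∈ inversion (0 : E) 1 ⁻¹' (D \ {0}) := by
  have hinv := inversion_involutive (0 : E) one_ne_zero
  constructor
  · intro hx v hv
    have hv0 : v ≠ 0 := by rintro rfl; simp at hv; linarith
    have hiv0 : inversion (0 : E) 1 v ≠ 0 := by rwa [Ne, inversion_eq_center one_ne_zero]
    refine ⟨hx ?_, hiv0⟩
    rwa [mem_closedBall_norm_iff_one_le_inner_inversion hiv0, hinv]
  · intro hx z hz
    rcases eq_or_ne z 0 with rfl | hz0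
    · exact h0
    · have hizD := (hx _ ((mem_closedBall_norm_iff_one_le_inner_inversion hz0).mp hz)).1
      rwa [hinv] at hizD

theorem isClosed_inversion_preimage_diff_zero {D : Set E} (hD : IsCompact D) :
    IsClosed (inversion (0 : E) 1 ⁻¹' (D \ {0})) := by
  obtain ⟨r, hr, hDr⟩ := hD.isBounded.subset_closedBall_lt 0 0
  have hne : ∀ z ∈ {z : E | r⁻¹ ≤ ‖z‖}, z ≠ 0 := by
    rintro z hz rfl
    simp only [mem_ofPred_eq, norm_zero] at hz
    exact (inv_pos.mpr hr).not_ge hz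
  have hA : inversion (0 : E) 1 ⁻¹' (D \ {0}) = {z | r⁻¹ ≤ ‖z‖} ∩ inversion (0 : E) 1 ⁻¹' D := by
    ext z
    simp only [mem_preimage, mem_sdiff, mem_singleton_iff, mem_inter_iff, mem_ofPred_eq,
      inversion_eq_center one_ne_zero]
    constructor
    · rintro ⟨hzD, hz0⟩
      refine ⟨?_, hzD⟩
      have := hDr hzD
      rw [mem_closedBall, dist_inversion_center, dist_zero_right] at this
      rw [inv_le_comm₀ hr (norm_pos_iff.mpr hz0)]
      simpa using this
    · rintro ⟨hz, hzD⟩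
      exact ⟨hzD, hne z hz⟩
  rw [hA]
  exact (continuousOn_const.inversion continuousOn_const continuousOn_id hne)
    |>.preimage_isClosed_of_isClosed (isClosed_le continuous_const continuous_norm) hD.isClosed

theorem notMem_convexHull_iff_exists_inner [CompleteSpace E] {U : Set E} (hU : IsOpen U)
    (h0 : (0 : E) ∈ U) (w : E) :
    w ∉ convexHull ℝ U ↔ ∃ s, (∀ v ∈ U, ⟪v, s⟫ < 1) ∧ 1 ≤ ⟪w, s⟫ := by
  constructor
  · intro hw
    obtain ⟨f, hf⟩ := geometric_hahn_banach_open_point (convex_convexHull ℝ U) hU.convexHull hw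
    have hc : 0 < f w := by simpa using hf 0 (subset_convexHull ℝ U h0)
    refine ⟨(f w)⁻¹ • (InnerProductSpace.toDual ℝ E).symm f, fun v hv ↦ ?_, ?_⟩
    · rw [real_inner_smul_right, real_inner_comm, InnerProductSpace.toDual_symm_apply,
        inv_mul_lt_one₀ hc]
      exact hf v (subset_convexHull ℝ U hv)
    · rw [real_inner_smul_right, real_inner_comm, InnerProductSpace.toDual_symm_apply,
        inv_mul_cancel₀ hc.ne']
  · rintro ⟨s, hsU, hws⟩ hwU
    have hws' : ⟪w, s⟫ < 1 := convexHull_min hsU (convex_halfSpace_lt (f := (⟪·, s⟫))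
      ⟨fun u v ↦ inner_add_left u v s, fun c u ↦ real_inner_smul_left u s c⟩ 1) hwU
    exact hws.not_gt hws'

theorem mem_biUnion_closedBall_norm_iff_notMem_convexHull [CompleteSpace E] {D : Set E}
    (hD : IsCompact D) (h0 : (0 : E) ∈ D) {y : E} (hy : y ≠ 0) :
    y ∈ ⋃ x ∈ {x : E | closedBall x ‖x‖ ⊆ D}, closedBall x ‖x‖ ↔
      inversion (0 : E) 1 y ∉ convexHull ℝ (inversion (0 : E) 1 ⁻¹' (D \ {0}))ᶜ := by
  have h0A : (0 : E) ∈ (inversion (0 : E) 1 ⁻¹' (D \ {0}))ᶜ := by simp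
  rw [notMem_convexHull_iff_exists_inner
    (isClosed_inversion_preimage_diff_zero hD).isOpen_compl h0A]
  simp only [mem_iUnion₂, mem_ofPred_eq, closedBall_norm_subset_iff h0,
    mem_closedBall_norm_iff_one_le_inner_inversion hy]
  constructor
  · rintro ⟨x, hxD, hyx⟩
    refine ⟨(2 : ℝ) • x, fun v hv ↦ ?_, by rwa [real_inner_smul_right]⟩
    rw [real_inner_smul_right]
    exact not_le.mp fun h ↦ hv (hxD v h)
  · rintro ⟨s, hsA, hys⟩
    refine ⟨(2 : ℝ)⁻¹ • s, fun v hv ↦ ?_, ?_⟩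
    · by_contra hvA
      rw [real_inner_smul_right, mul_inv_cancel_left₀ two_ne_zero] at hv
      exact (hsA v hvA).not_ge hv
    · rwa [real_inner_smul_right, mul_inv_cancel_left₀ two_ne_zero]

theorem biUnion_closedBall_norm_eq_compl_inversion [CompleteSpace E] {D : Set E}
    (hD : IsCompact D) (h0 : (0 : E) ∈ D) :
    ⋃ x ∈ {x : E | closedBall x ‖x‖ ⊆ D}, closedBall x ‖x‖ =
      (inversion (0 : E) 1 '' (convexHull ℝ (inversion (0 : E) 1 '' (D \ {0}))ᶜ \ {0}))ᶜ := by
  simp only [(inversion_involutive (0 : E) one_ne_zero).image_eq_preimage_symm]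
  ext y
  rcases eq_or_ne y 0 with rfl | hy
  · exact iff_of_true (mem_biUnion (by simpa using h0) (mem_closedBall_self (norm_nonneg _)))
      (by simp)
  · rw [mem_biUnion_closedBall_norm_iff_notMem_convexHull hD h0 hy]
    simp [inversion_eq_center one_ne_zero, hy]

end InnerProductSpace

theorem vflower_zero_eq (L : Set E2) :
    vflower 0 L = ⋃ x ∈ (fun s : E2 ↦ (2 : ℝ)⁻¹ • s) '' L, closedBall x ‖x‖ := by
  rw [vflower, biUnion_image]
  refine iUnion₂_congr fun s _ ↦ ?_
  rw [zero_add, sub_zero, norm_smul]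
  norm_num [div_eq_inv_mul]

theorem vflower_zero_two_smul_image (K : Set E2) :
    vflower 0 ((fun x : E2 ↦ (2 : ℝ) • x) '' K) = ⋃ x ∈ K, closedBall x ‖x‖ := by
  rw [vflower_zero_eq, image_image]
  simp [smul_smul]

theorem vflower_zero_subset_biUnion_closedBall_norm {L D : Set E2} (hL : vflower 0 L ⊆ D) :
    vflower 0 L ⊆ ⋃ x ∈ {x : E2 | closedBall x ‖x‖ ⊆ D}, closedBall x ‖x‖ := by
  rw [vflower_zero_eq] at hL ⊢
  exact biUnion_subset_biUnion_left fun x hx ↦ (subset_biUnion_of_mem hx).trans hL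

theorem maximal_flower_general (D : Set E2) (hDc : IsCompact D)
    (hstar : (0:E2) ∈ D ∧ ∀ x ∈ D, segment ℝ 0 x ⊆ D)
    (KD FD : Set E2) (hKD : KD = {x : E2 | closedBall x ‖x‖ ⊆ D})
    (hFD : FD = ⋃ x ∈ KD, closedBall x ‖x‖) :
    FD ⊆ D ∧
    (Convex ℝ ((fun x : E2 => (2:ℝ) • x) '' KD) ∧
      FD = vflower 0 ((fun x : E2 => (2:ℝ) • x) '' KD)) ∧
    (∀ K' : Set E2, K'.Nonempty → IsCompact K' → Convex ℝ K' → (0:E2) ∈ K' →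
      vflower 0 K' ⊆ D → vflower 0 K' ⊆ FD) ∧
    FD = (EuclideanGeometry.inversion (0:E2) 1 ''
        ((convexHull ℝ ((EuclideanGeometry.inversion (0:E2) 1 '' (D \ {0}))ᶜ)) \ {0}))ᶜ := by
  subst hKD hFD
  refine ⟨iUnion₂_subset fun x hx ↦ hx, ⟨?_, (vflower_zero_two_smul_image _).symm⟩,
    fun K' _ _ _ _ ↦ vflower_zero_subset_biUnion_closedBall_norm,
    biUnion_closedBall_norm_eq_compl_inversion hDc hstar.1⟩
  rw [image_smul]
  exact (convex_setOf_closedBall_norm_subset D).smul 2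

/-- for a compact star-shaped (w.r.t. `0`) set `D` with `0` in its
interior, the set `F_D = ⋃_{x ∈ K_D} closedBall x ‖x‖`, where
`K_D = {x : closedBall x ‖x‖ ⊆ D}`, satisfies: (a) `F_D ⊆ D`; (b) `F_D` is the Voronoi
flower of the convex set `2·K_D`; (c) `F_D` is the unique maximal Voronoi flower
contained in `D`; (d) `F_D = ℝ² \ i(convexHull(ℝ² \ i(D \ {0})) \ {0})`. -/
theorem maximal_flower (D : Set E2) (hDc : IsCompact D)
    (hstar : (0:E2) ∈ D ∧ ∀ x ∈ D, segment ℝ 0 x ⊆ D) (h0 : (0:E2) ∈ interior D)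
    (KD FD : Set E2) (hKD : KD = {x : E2 | closedBall x ‖x‖ ⊆ D})
    (hFD : FD = ⋃ x ∈ KD, closedBall x ‖x‖) :
    FD ⊆ D ∧
    (Convex ℝ ((fun x : E2 => (2:ℝ) • x) '' KD) ∧
      FD = vflower 0 ((fun x : E2 => (2:ℝ) • x) '' KD)) ∧
    (∀ K' : Set E2, K'.Nonempty → IsCompact K' → Convex ℝ K' → (0:E2) ∈ K' →
      vflower 0 K' ⊆ D → vflower 0 K' ⊆ FD) ∧
    FD = (EuclideanGeometry.inversion (0:E2) 1 ''
        ((convexHull ℝ ((EuclideanGeometry.inversion (0:E2) 1 '' (D \ {0}))ᶜ)) \ {0}))ᶜ :=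
  maximal_flower_general D hDc hstar KD FD hKD hFD
end
end
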